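/- Let (P_i)_{i=0}^N be defined backward by P_N = 0 and P_{i} = Γ(P_{i+1}), where Γ(P) = τQ + (I+τA)ᵀP(I+τA) − (I+τA)ᵀPτB(R+τBᵀPB)⁻¹BᵀP(I+τA) and τ = T/N. Then there is a constant C, depending only on T, ‖A‖₂, ‖Q‖₂ (and not on N), such that ‖P_i‖₂ ≤ C for all i = 0,…,N. -/

import Mathlib

/-!
Write `L = 1 + τA` and `S = R + τBᵀPB`, so that one step is `Γ(P) = τQ + LᵀPL - LᵀP(τB)S⁻¹BᵀPL`.
For `P ≥ 0` the subtracted term is positive semidefinite, and completing the square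
`LᵀPL - LᵀP(τB)S⁻¹BᵀPL = (L - τBG)ᵀP(L - τBG) + τGᵀRG` with `G = S⁻¹BᵀPL` shows it is at most
`LᵀPL`. Hence `0 ≤ Γ(P) ≤ τQ + LᵀPL` in the Loewner order, and as the spectral norm is monotone
on positive semidefinite matrices, `‖Γ(P)‖ ≤ τ‖Q‖ + (1 + τ‖A‖)²‖P‖`. The discrete Grönwall
inequality turns this into `‖P_i‖ ≤ Nτ‖Q‖ exp(N((1 + τ‖A‖)² - 1)) ≤ T‖Q‖ exp(2T‖A‖ + (T‖A‖)²)`.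
-/

open Matrix

/-- The spectral norm (operator norm induced by Euclidean norms) of a real matrix. -/
noncomputable def sNorm {m n : ℕ} (A : Matrix (Fin m) (Fin n) ℝ) : ℝ :=
  ‖LinearMap.toContinuousLinearMap (Matrix.toEuclideanLin A)‖

/-- The one-step Riccati difference operator. -/
noncomputable def riccatiStep {n d : ℕ} (τ : ℝ) (Q A : Matrix (Fin n) (Fin n) ℝ)
    (R : Matrix (Fin d) (Fin d) ℝ) (B : Matrix (Fin n) (Fin d) ℝ)
    (P : Matrix (Fin n) (Fin n) ℝ) : Matrix (Fin n) (Fin n) ℝ :=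
  τ • Q + (1 + τ • A)ᵀ * P * (1 + τ • A)
    - (1 + τ • A)ᵀ * P * (τ • B) * (R + τ • (Bᵀ * P * B))⁻¹ * Bᵀ * P * (1 + τ • A)

open scoped MatrixOrder Matrix.Norms.L2Operator

theorem ContinuousLinearMap.norm_le_norm_of_nonneg_of_le {𝕜 E : Type*} [RCLike 𝕜]
    [NormedAddCommGroup E] [InnerProductSpace 𝕜 E] {S T : E →L[𝕜] E}
    (hS : 0 ≤ S) (hST : S ≤ T) : ‖S‖ ≤ ‖T‖ := by
  rw [nonneg_iff_isPositive] at hS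
  rw [S.norm_eq_iSup_rayleighQuotient hS.isSymmetric]
  refine ciSup_le fun x => ?_
  have hS_le_T : S.rayleighQuotient x ≤ T.rayleighQuotient x := by
    have := hST.2 x
    simp only [reApplyInnerSelf_apply, _root_.sub_apply, inner_sub_left, map_sub,
      sub_nonneg] at this
    exact div_le_div_of_nonneg_right this (by positivity)
  calc |S.rayleighQuotient x| = S.rayleighQuotient x :=
        abs_of_nonneg (div_nonneg (hS.2 x) (by positivity))
    _ ≤ |T.rayleighQuotient x| := hS_le_T.trans (le_abs_self _)
    _ ≤ ‖T‖ := T.rayleighQuotient_le_norm x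

theorem sNorm_eq_l2_opNorm {m n : ℕ} (A : Matrix (Fin m) (Fin n) ℝ) : sNorm A = ‖A‖ := rfl

namespace Matrix

variable {m k : Type*}

theorem l2_opNorm_le_of_nonneg_of_le {𝕜 : Type*} [RCLike 𝕜] [Fintype m] [DecidableEq m]
    {X Y : Matrix m m 𝕜} (hX : 0 ≤ X) (hXY : X ≤ Y) : ‖X‖ ≤ ‖Y‖ := by
  have toCLM_nonneg {Z : Matrix m m 𝕜} (hZ : 0 ≤ Z) : 0 ≤ toEuclideanCLM (n := m) (𝕜 := 𝕜) Z := by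
    rw [ContinuousLinearMap.nonneg_iff_isPositive,
      ← ContinuousLinearMap.isPositive_toLinearMap_iff]
    exact isPositive_toEuclideanLin_iff.2 hZ.posSemidef
  refine ContinuousLinearMap.norm_le_norm_of_nonneg_of_le (toCLM_nonneg hX) ?_
  rw [ContinuousLinearMap.le_def, ← map_sub, ← ContinuousLinearMap.nonneg_iff_isPositive]
  exact toCLM_nonneg (sub_nonneg.2 hXY)

theorem l2_opNorm_one_le [Fintype m] [DecidableEq m] : ‖(1 : Matrix m m ℝ)‖ ≤ 1 := by
  rw [cstar_norm_def, _root_.map_one]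
  exact ContinuousLinearMap.norm_id_le

theorem l2_opNorm_transpose [Fintype m] [DecidableEq m] (X : Matrix m m ℝ) : ‖Xᵀ‖ = ‖X‖ := by
  rw [← conjTranspose_eq_transpose_of_trivial, l2_opNorm_conjTranspose]

theorem transpose_eq_self_of_nonneg {X : Matrix m m ℝ} (hX : 0 ≤ X) : Xᵀ = X := by
  simpa only [conjTranspose_eq_transpose_of_trivial] using hX.posSemidef.isHermitian.eq

theorem transpose_mul_mul_nonneg [Fintype m] [Fintype k] {X : Matrix m m ℝ} (hX : 0 ≤ X)
    (C : Matrix m k ℝ) : 0 ≤ Cᵀ * X * C := by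
  simpa only [conjTranspose_eq_transpose_of_trivial] using
    (hX.posSemidef.conjTranspose_mul_mul_same C).nonneg

end Matrix

section RiccatiCorrection

variable {m k : Type*} [Fintype m] [Fintype k] [DecidableEq k]
  {τ : ℝ} {L P : Matrix m m ℝ} {R : Matrix k k ℝ} {B : Matrix m k ℝ}

noncomputable def riccatiCorrection (τ : ℝ) (L P : Matrix m m ℝ) (R : Matrix k k ℝ)
    (B : Matrix m k ℝ) : Matrix m m ℝ :=
  Lᵀ * P * (τ • B) * (R + τ • (Bᵀ * P * B))⁻¹ * Bᵀ * P * L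

theorem riccatiCorrection_eq (hP : Pᵀ = P) :
    riccatiCorrection τ L P R B =
      τ • ((Bᵀ * P * L)ᵀ * (R + τ • (Bᵀ * P * B))⁻¹ * (Bᵀ * P * L)) := by
  simp only [riccatiCorrection, transpose_mul, transpose_transpose, hP, Matrix.mul_smul,
    Matrix.smul_mul, Matrix.mul_assoc]

theorem riccatiCorrection_nonneg (hτ : 0 ≤ τ) (hP : 0 ≤ P) (hR : 0 ≤ R) :
    0 ≤ riccatiCorrection τ L P R B := by
  have hS : 0 ≤ R + τ • (Bᵀ * P * B) :=
    add_nonneg hR (smul_nonneg hτ (transpose_mul_mul_nonneg hP B))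
  rw [riccatiCorrection_eq (transpose_eq_self_of_nonneg hP)]
  exact smul_nonneg hτ (transpose_mul_mul_nonneg hS.posSemidef.inv.nonneg _)

theorem riccatiCorrection_le (hτ : 0 ≤ τ) (hP : 0 ≤ P) (hR : R.PosDef) :
    riccatiCorrection τ L P R B ≤ Lᵀ * P * L := by
  have hPt := transpose_eq_self_of_nonneg hP
  set S := R + τ • (Bᵀ * P * B) with hS_def
  set K := Bᵀ * P * L
  set G := S⁻¹ * K
  have hSt : S⁻¹ᵀ = S⁻¹ := by
    rw [transpose_nonsing_inv, hS_def, transpose_add, transpose_smul, transpose_mul,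
      transpose_mul, transpose_eq_self_of_nonneg hR.posSemidef.nonneg, hPt, transpose_transpose,
      Matrix.mul_assoc]
  have hSS : S⁻¹ * S = 1 :=
    nonsing_inv_mul S ((isUnit_iff_isUnit_det S).1
      (hR.add_posSemidef (smul_nonneg hτ (transpose_mul_mul_nonneg hP B)).posSemidef).isUnit)
  have hKt : Kᵀ = Lᵀ * P * B := by
    simp only [K, transpose_mul, transpose_transpose, hPt, Matrix.mul_assoc]
  have hGt : Gᵀ = Kᵀ * S⁻¹ := by rw [transpose_mul, hSt]
  have expand : (L - τ • (B * G))ᵀ * P * (L - τ • (B * G)) + τ • (Gᵀ * R * G) =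
      Lᵀ * P * L - τ • (Lᵀ * P * B * G) - τ • (Gᵀ * Bᵀ * P * L) + τ • (Gᵀ * S * G) := by
    simp only [S, transpose_sub, transpose_smul, transpose_mul, Matrix.mul_add, Matrix.add_mul,
      Matrix.mul_sub, Matrix.sub_mul, Matrix.mul_smul, Matrix.smul_mul, Matrix.mul_assoc]
    module
  have cross_left : Lᵀ * P * B * G = Kᵀ * S⁻¹ * K := by
    rw [hKt]; simp only [G, Matrix.mul_assoc]
  have cross_right : Gᵀ * Bᵀ * P * L = Kᵀ * S⁻¹ * K := by
    rw [hGt]; simp only [K, Matrix.mul_assoc]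
  have quadratic : Gᵀ * S * G = Kᵀ * S⁻¹ * K := by
    rw [hGt]; simp only [G, Matrix.mul_assoc]; rw [← Matrix.mul_assoc S⁻¹ S, hSS, Matrix.one_mul]
  have completed_square : Lᵀ * P * L - riccatiCorrection τ L P R B =
      (L - τ • (B * G))ᵀ * P * (L - τ • (B * G)) + τ • (Gᵀ * R * G) := by
    rw [expand, cross_left, cross_right, quadratic, riccatiCorrection_eq hPt]
    abel
  rw [← sub_nonneg, completed_square]
  exact add_nonneg (transpose_mul_mul_nonneg hP _)
    (smul_nonneg hτ (transpose_mul_mul_nonneg hR.posSemidef.nonneg _))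

end RiccatiCorrection

section RiccatiStep

variable {n d : ℕ} {τ : ℝ} {Q A P : Matrix (Fin n) (Fin n) ℝ} {R : Matrix (Fin d) (Fin d) ℝ}
  {B : Matrix (Fin n) (Fin d) ℝ}

theorem riccatiStep_eq :
    riccatiStep τ Q A R B P = τ • Q +
      ((1 + τ • A)ᵀ * P * (1 + τ • A) - riccatiCorrection τ (1 + τ • A) P R B) := by
  rw [riccatiStep, riccatiCorrection, add_sub_assoc]

theorem riccatiStep_nonneg (hτ : 0 ≤ τ) (hQ : 0 ≤ Q) (hR : R.PosDef) (hP : 0 ≤ P) :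
    0 ≤ riccatiStep τ Q A R B P := by
  rw [riccatiStep_eq]
  exact add_nonneg (smul_nonneg hτ hQ) (sub_nonneg.2 (riccatiCorrection_le hτ hP hR))

theorem riccatiStep_le (hτ : 0 ≤ τ) (hR : 0 ≤ R) (hP : 0 ≤ P) :
    riccatiStep τ Q A R B P ≤ τ • Q + (1 + τ • A)ᵀ * P * (1 + τ • A) := by
  rw [riccatiStep_eq, ← add_sub_assoc]
  exact sub_le_self _ (riccatiCorrection_nonneg hτ hP hR)

theorem norm_riccatiStep_le (hτ : 0 ≤ τ) (hQ : 0 ≤ Q) (hR : R.PosDef) (hP : 0 ≤ P) :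
    ‖riccatiStep τ Q A R B P‖ ≤ τ * ‖Q‖ + (1 + τ * ‖A‖) ^ 2 * ‖P‖ := by
  have hL : ‖1 + τ • A‖ ≤ 1 + τ * ‖A‖ := by
    grw [norm_add_le, norm_smul, Real.norm_of_nonneg hτ, l2_opNorm_one_le]
  calc ‖riccatiStep τ Q A R B P‖ ≤ ‖τ • Q + (1 + τ • A)ᵀ * P * (1 + τ • A)‖ :=
        l2_opNorm_le_of_nonneg_of_le (riccatiStep_nonneg hτ hQ hR hP)
          (riccatiStep_le hτ hR.posSemidef.nonneg hP)
    _ ≤ τ * ‖Q‖ + ‖1 + τ • A‖ * ‖P‖ * ‖1 + τ • A‖ := by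
        grw [norm_add_le, norm_smul, Real.norm_of_nonneg hτ, l2_opNorm_mul, l2_opNorm_mul,
          l2_opNorm_transpose]
    _ = τ * ‖Q‖ + ‖1 + τ • A‖ ^ 2 * ‖P‖ := by ring
    _ ≤ τ * ‖Q‖ + (1 + τ * ‖A‖) ^ 2 * ‖P‖ := by grw [hL]

theorem riccatiStep_backward_nonneg (hτ : 0 ≤ τ) (hQ : 0 ≤ Q) (hR : R.PosDef) {N : ℕ}
    {P : ℕ → Matrix (Fin n) (Fin n) ℝ} (hPN : P N = 0)
    (hrec : ∀ i < N, P i = riccatiStep τ Q A R B (P (i + 1))) :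
    ∀ i ≤ N, 0 ≤ P i := by
  intro i hi
  induction hi using Nat.decreasingInduction with
  | self => exact hPN.symm.le
  | of_succ j hj ih => exact hrec j hj ▸ riccatiStep_nonneg hτ hQ hR ih

end RiccatiStep

theorem le_of_backward_discrete_gronwall {x : ℕ → ℝ} {N : ℕ} {a c : ℝ} (ha : 0 ≤ a)
    (hc : 0 ≤ c) (hx₀ : 0 ≤ x 0) (hxN : x N = 0)
    (hstep : ∀ i < N, x i ≤ (1 + c) * x (i + 1) + a) :
    ∀ i ≤ N, x i ≤ N * a * Real.exp (N * c) := by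
  intro i hi
  -- `k ↦ x (N - k)` is constant from `k = N` on, which keeps the forward recurrence valid there.
  have hu : ∀ k ≥ 0, x (N - (k + 1)) ≤ (1 + c) * x (N - k) + a := by
    intro k _
    by_cases hk : k < N
    · simpa only [show N - (k + 1) + 1 = N - k by omega] using hstep (N - (k + 1)) (by omega)
    · rw [show N - (k + 1) = 0 by omega, show N - k = 0 by omega]
      nlinarith
  have hgronwall := discrete_gronwall (u := fun k => x (N - k)) (c := fun _ => c)
    (b := fun _ => a) (by simp [hxN]) hu (fun _ _ => hc) (fun _ _ => ha) (Nat.zero_le (N - i))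
  simp only [Nat.sub_sub_self hi, Nat.sub_zero, hxN, Finset.sum_const, Nat.card_Ico,
    nsmul_eq_mul, zero_add] at hgronwall
  have hNi : ((N - i : ℕ) : ℝ) ≤ N := by exact_mod_cast Nat.sub_le N i
  exact hgronwall.trans (by gcongr)

/-- Solutions of the backward Riccati difference equation `P_N = 0`,
`P_i = Γ(P_{i+1})` with stepsize `τ = T/N` are bounded uniformly in `N`: there is a constant
`C` depending only on `T`, `‖A‖₂` and `‖Q‖₂` (in particular not on `N`, `R` or `B`) such that
`‖P_i‖₂ ≤ C` for all `i = 0, …, N`. -/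
theorem riccati_difference_uniform_bound {n : ℕ} (T : ℝ) (hT : 0 < T)
    (A Q : Matrix (Fin n) (Fin n) ℝ) (hQ : Q.PosDef) :
    ∃ C : ℝ, ∀ (d : ℕ) (R : Matrix (Fin d) (Fin d) ℝ) (B : Matrix (Fin n) (Fin d) ℝ),
      R.PosDef → ∀ (N : ℕ), 0 < N → ∀ P : ℕ → Matrix (Fin n) (Fin n) ℝ,
        P N = 0 → (∀ i < N, P i = riccatiStep (T / N) Q A R B (P (i + 1))) →
        ∀ i ≤ N, sNorm (P i) ≤ C := by
  refine ⟨T * ‖Q‖ * Real.exp (2 * T * ‖A‖ + (T * ‖A‖) ^ 2), ?_⟩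
  intro d R B hR N hN P hPN hrec i hi
  rw [sNorm_eq_l2_opNorm]
  have hN : (1 : ℝ) ≤ N := by exact_mod_cast hN
  have hτ : 0 ≤ T / N := by positivity
  have hP := riccatiStep_backward_nonneg hτ hQ.posSemidef.nonneg hR hPN hrec
  have hbound := le_of_backward_discrete_gronwall (x := fun i => ‖P i‖) (a := T / N * ‖Q‖)
    (c := (1 + T / N * ‖A‖) ^ 2 - 1) (by positivity)
    (by nlinarith [norm_nonneg A, mul_nonneg hτ (norm_nonneg A)]) (norm_nonneg _) (by simp [hPN])
    (fun j hj => by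
      simpa only [hrec j hj, add_sub_cancel, add_comm (T / N * ‖Q‖)] using
        norm_riccatiStep_le hτ hQ.posSemidef.nonneg hR (hP (j + 1) hj)) i hi
  have hexponent : N * ((1 + T / N * ‖A‖) ^ 2 - 1) ≤ 2 * T * ‖A‖ + (T * ‖A‖) ^ 2 := by
    have : N * ((1 + T / N * ‖A‖) ^ 2 - 1) = 2 * T * ‖A‖ + (T * ‖A‖) ^ 2 / N := by
      field_simp; ring
    rw [this]
    gcongr
    exact div_le_self (by positivity) hN
  calc ‖P i‖ ≤ N * (T / N * ‖Q‖) * Real.exp (N * ((1 + T / N * ‖A‖) ^ 2 - 1)) := hbound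
    _ ≤ T * ‖Q‖ * Real.exp (2 * T * ‖A‖ + (T * ‖A‖) ^ 2) := by
      rw [← mul_assoc, mul_div_cancel₀ T (by positivity)]
      gcongr
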